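/- arXiv:1401.6916 — 3 statements merged into one kernel-verified Lean document; each statement's English description precedes it below -/
import Mathlib

section
/- Every linear order admits a dense bicoloration; that is, for every linearly ordered set (L, ≤) there exists a function β : L → Bool such that both β⁻¹(false) and β⁻¹(true) intersect every interval of L containing at least two elements. -/
def IsInterval {L : Type*} [LinearOrder L] (I : Set L) : Prop :=
  ∀ x ∈ I, ∀ y ∈ I, ∀ z, x ≤ z → z ≤ y → z ∈ I

/-!
Points with only finitely many points between them lie in a common discrete block; colouring each
point that has an immediate neighbour by the parity of its distance to a fixed representative of
its block gives any two consecutive points different colours. An interval `[x, y]` without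
consecutive points is densely ordered. Inside it, a subsegment of minimal cardinality `κ` has all
its subsegments of cardinality `κ`, and there are only `κ` of those, so a transfinite choice of
distinct points splits it into two sets both meeting every subsegment. A maximal disjoint family of
such homogeneous segments meets every densely ordered segment, so the union of the splits works for
all of them at once.
-/

open Set Cardinal

universe u

theorem exists_injective_forall_mem {ι α : Type u} (T : ι → Set α)
    (hT : ∀ i, #ι ≤ #(T i)) : ∃ f : ι → α, Function.Injective f ∧ ∀ i, f i ∈ T i := by
  obtain ⟨r, _, hr⟩ := Cardinal.exists_ord_eq ι
  -- Enumerating `ι` in order type `(#ι).ord`, fewer than `#ι` points are chosen before `i`.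
  have step : ∀ i (g : ∀ j, r j i → α), ∃ a ∈ T i, ∀ j hj, g j hj ≠ a := by
    intro i g
    have hsmall : #(range fun j : {j // r j i} => g j j.2) < #(T i) :=
      mk_range_le.trans_lt ((card_typein_lt i hr).trans_le (hT i))
    obtain ⟨a, ha, hga⟩ := not_subset.1 fun h => (mk_le_mk_of_subset h).not_gt hsmall
    exact ⟨a, ha, fun j hj h => hga ⟨⟨j, hj⟩, h⟩⟩
  choose pick pick_mem pick_ne using step
  let f : ι → α := IsWellFounded.wf.fix pick
  have hf : ∀ i, f i = pick i fun j _ => f j := IsWellFounded.wf.fix_eq pick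
  refine ⟨f, fun i j hij => ?_, fun i => hf i ▸ pick_mem _ _⟩
  rcases trichotomous_of r i j with h | rfl | h
  · exact absurd (hij.trans (hf j)) (pick_ne j (fun k _ => f k) i h)
  · rfl
  · exact absurd (hij.symm.trans (hf i)) (pick_ne i (fun k _ => f k) j h)

theorem exists_set_inter_nonempty_diff_nonempty {ι α : Type u} (T : ι → Set α)
    (hT : ∀ i, #(ι × Bool) ≤ #(T i)) :
    ∃ A : Set α, ∀ i, (T i ∩ A).Nonempty ∧ (T i \ A).Nonempty := by
  obtain ⟨f, hf, hfT⟩ := exists_injective_forall_mem (fun k : ι × Bool => T k.1) fun k => hT k.1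
  refine ⟨range fun i => f (i, true), fun i => ⟨⟨_, hfT (i, true), i, rfl⟩, ?_⟩⟩
  exact ⟨_, hfT (i, false), fun ⟨j, hj⟩ => Bool.noConfusion (congrArg Prod.snd (hf hj))⟩

theorem exists_maximal_pairwiseDisjoint {ι α : Type*} (t : Set ι) (B : ι → Set α) :
    ∃ u ⊆ t, u.PairwiseDisjoint B ∧ ∀ a ∈ t, (B a).Nonempty → ∃ b ∈ u, (B a ∩ B b).Nonempty := by
  obtain ⟨u, hu⟩ := zorn_subset {u | u ⊆ t ∧ u.PairwiseDisjoint B} fun c hct hc =>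
    ⟨⋃₀ c, ⟨sUnion_subset fun u hu => (hct hu).1,
      (hc.pairwiseDisjoint_sUnion B).2 fun u hu => (hct hu).2⟩, fun _ => subset_sUnion_of_mem⟩
  refine ⟨u, hu.prop.1, hu.prop.2, fun a ha hBa => ?_⟩
  by_contra! hdisj
  have hins : insert a u ∈ {u | u ⊆ t ∧ u.PairwiseDisjoint B} :=
    ⟨insert_subset ha hu.prop.1, hu.prop.2.insert fun b hb _ =>
      disjoint_iff_inter_eq_empty.2 (hdisj b hb)⟩
  have hau : a ∈ u := hu.mem_of_prop_insert hins
  exact hBa.ne_empty (by simpa using hdisj a hau)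

variable {L : Type u} [LinearOrder L]

def IsDenseSegment (x y : L) : Prop :=
  x < y ∧ ∀ p q, x ≤ p → q ≤ y → p < q → (Ioo p q).Nonempty

def IsHomogeneousSegment (x y : L) : Prop :=
  IsDenseSegment x y ∧ ∀ p q, x < p → p < q → q < y → #(Ioo x y) ≤ #(Ioo p q)

namespace IsDenseSegment

variable {x y : L}

theorem mono (h : IsDenseSegment x y) {p q : L} (hxp : x ≤ p) (hqy : q ≤ y) (hpq : p < q) :
    IsDenseSegment p q :=
  ⟨hpq, fun a b hpa hbq => h.2 a b (hxp.trans hpa) (hbq.trans hqy)⟩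

theorem exists_lt_lt (h : IsDenseSegment x y) : ∃ p q, x < p ∧ p < q ∧ q < y := by
  obtain ⟨q, hxq, hqy⟩ := h.2 x y le_rfl le_rfl h.1
  obtain ⟨p, hxp, hpq⟩ := h.2 x q le_rfl hqy.le hxq
  exact ⟨p, q, hxp, hpq, hqy⟩

theorem infinite_Ioo (h : IsDenseSegment x y) : (Ioo x y).Infinite := by
  intro hfin
  obtain ⟨m, hm, hmin⟩ := hfin.exists_minimal (h.2 x y le_rfl le_rfl h.1)
  obtain ⟨w, hxw, hwm⟩ := h.2 x m le_rfl hm.2.le hm.1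
  exact hwm.not_ge (hmin ⟨hxw, hwm.trans hm.2⟩ hwm.le)

theorem not_covBy_of_mem_Ioo (h : IsDenseSegment x y) {z : L} (hz : z ∈ Ioo x y) (w : L) :
    ¬ w ⋖ z ∧ ¬ z ⋖ w := by
  refine ⟨fun hwz => ?_, fun hzw => ?_⟩
  · rcases le_or_gt x w with hxw | hwx
    · obtain ⟨c, hc⟩ := h.2 w z hxw hz.2.le hwz.1
      exact hwz.2 hc.1 hc.2
    · exact hwz.2 hwx hz.1
  · rcases le_or_gt w y with hwy | hyw
    · obtain ⟨c, hc⟩ := h.2 z w hz.1.le hwy hzw.1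
      exact hzw.2 hc.1 hc.2
    · exact hzw.2 hz.2 hyw

theorem exists_isHomogeneousSegment (h : IsDenseSegment x y) :
    ∃ p q, x ≤ p ∧ q ≤ y ∧ IsHomogeneousSegment p q := by
  obtain ⟨p₀, q₀, hxp₀, hpq₀, hqy₀⟩ := h.exists_lt_lt
  obtain ⟨⟨p, q⟩, ⟨hxp, hpq, hqy⟩, hmin⟩ :=
    (Cardinal.lt_wf.onFun (f := fun e : L × L => #(Ioo e.1 e.2))).has_min
      {e | x < e.1 ∧ e.1 < e.2 ∧ e.2 < y} ⟨(p₀, q₀), hxp₀, hpq₀, hqy₀⟩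
  refine ⟨p, q, hxp.le, hqy.le, h.mono hxp.le hqy.le hpq, fun a b hpa hab hbq => ?_⟩
  exact not_lt.1 (hmin (a, b) ⟨hxp.trans hpa, hab, hbq.trans hqy⟩)

end IsDenseSegment

theorem IsHomogeneousSegment.exists_split {x y : L} (h : IsHomogeneousSegment x y) :
    ∃ A ⊆ Ioo x y, ∀ p q, x < p → p < q → q < y →
      (Ioo p q ∩ A).Nonempty ∧ (Ioo p q \ A).Nonempty := by
  let ι := {e : Ioo x y × Ioo x y // e.1 < e.2}
  have hκ : ℵ₀ ≤ #(Ioo x y) := infinite_iff.1 h.1.infinite_Ioo.to_subtype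
  have hι : #(ι × Bool) ≤ #(Ioo x y) := calc
    #(ι × Bool) ≤ #(Ioo x y × Ioo x y) * 2 := by
      simp only [mk_prod, lift_uzero, lift_id, mk_fintype, Fintype.card_bool, Nat.cast_ofNat,
        lift_ofNat]
      gcongr
      exact mk_subtype_le _
    _ = #(Ioo x y) := by
      rw [mk_prod, lift_id, mul_eq_self hκ, mul_eq_left hκ (ofNat_le_aleph0.trans hκ) two_ne_zero]
  obtain ⟨A, hA⟩ := exists_set_inter_nonempty_diff_nonempty
    (fun e : ι => Ioo (e.1.1 : L) e.1.2) fun e => hι.trans (h.2 _ _ e.1.1.2.1 e.2 e.1.2.2.2)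
  refine ⟨A ∩ Ioo x y, inter_subset_right, fun p q hxp hpq hqy => ?_⟩
  have hsub : Ioo p q ⊆ Ioo x y := Ioo_subset_Ioo hxp.le hqy.le
  obtain ⟨hin, hout⟩ := hA ⟨(⟨p, hxp, hpq.trans hqy⟩, ⟨q, hxp.trans hpq, hqy⟩), hpq⟩
  rw [← inter_assoc, inter_right_comm, inter_eq_left.2 hsub]
  exact ⟨hin, hout.mono (sdiff_subset_sdiff_right inter_subset_left)⟩

theorem exists_split_of_isDenseSegment :
    ∃ A : Set L, ∀ x y, IsDenseSegment x y → (Ioo x y ∩ A).Nonempty ∧ (Ioo x y \ A).Nonempty := by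
  obtain ⟨M, hM, hMdisj, hMmax⟩ := exists_maximal_pairwiseDisjoint
    {e : L × L | IsHomogeneousSegment e.1 e.2} fun e => Ioo e.1 e.2
  have hsplit : ∀ e ∈ M, ∃ A ⊆ Ioo e.1 e.2, ∀ p q, e.1 < p → p < q → q < e.2 →
      (Ioo p q ∩ A).Nonempty ∧ (Ioo p q \ A).Nonempty := fun e he => (hM he).exists_split
  choose A hA_sub hA using hsplit
  refine ⟨⋃ e, ⋃ he : e ∈ M, A e he, fun x y h => ?_⟩
  obtain ⟨p, q, hxp, hqy, hpq⟩ := h.exists_isHomogeneousSegment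
  obtain ⟨e, he, hmeet⟩ := hMmax (p, q) hpq (hpq.1.2 p q le_rfl le_rfl hpq.1.1)
  rw [Ioo_inter_Ioo] at hmeet
  obtain ⟨w₁, w₂, hw₁, hw₁₂, hw₂⟩ := (h.mono (hxp.trans le_sup_left) (inf_le_left.trans hqy)
    (hmeet.some_mem.1.trans hmeet.some_mem.2)).exists_lt_lt
  have hsub : Ioo w₁ w₂ ⊆ Ioo x y := Ioo_subset_Ioo
    (hxp.trans (le_sup_left.trans hw₁.le)) ((hw₂.le.trans inf_le_left).trans hqy)
  obtain ⟨⟨a, haw, haA⟩, ⟨b, hbw, hbA⟩⟩ :=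
    hA e he w₁ w₂ (le_sup_right.trans_lt hw₁) hw₁₂ (hw₂.trans_le inf_le_right)
  refine ⟨⟨a, hsub haw, mem_iUnion₂_of_mem he haA⟩, ⟨b, hsub hbw, ?_⟩⟩
  simp only [mem_iUnion, not_exists]
  intro e' he' hbA'
  -- the intervals of `M` are disjoint, so `b` can only lie in the part of `A` chosen inside `e`
  obtain rfl : e' = e := hMdisj.elim_set he' he b (hA_sub e' he' hbA')
    (Ioo_subset_Ioo (le_sup_right.trans hw₁.le) (hw₂.le.trans inf_le_right) hbw)
  exact hbA hbA'

def finiteGapSetoid (L : Type*) [LinearOrder L] : Setoid L where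
  r u v := (uIcc u v).Finite
  iseqv :=
    ⟨fun u => by simp, fun h => by rwa [uIcc_comm], fun h₁ h₂ =>
      (h₁.union h₂).subset uIcc_subset_uIcc_union_uIcc⟩

noncomputable def parityColor (z : L) : Bool :=
  decide (Even (uIcc (Quotient.mk (finiteGapSetoid L) z).out z).ncard)

theorem CovBy.even_ncard_uIcc_iff {p q : L} (h : p ⋖ q) {r : L} (hfin : (uIcc r p).Finite) :
    Even (uIcc r q).ncard ↔ ¬ Even (uIcc r p).ncard := by
  rcases le_or_gt r p with hrp | hpr
  · rw [uIcc_of_le hrp] at hfin ⊢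
    rw [uIcc_of_le (hrp.trans h.1.le), ← Icc_union_Ioc_eq_Icc hrp h.1.le, h.Ioc_eq, union_singleton,
      ncard_insert_of_notMem (fun hq => h.1.not_ge hq.2) hfin, Nat.even_add_one]
  · have hqr : q ≤ r := h.ge_of_gt hpr
    rw [uIcc_of_ge (h.1.le.trans hqr)] at hfin
    rw [uIcc_of_ge hqr, uIcc_of_ge (h.1.le.trans hqr), ← Ico_union_Icc_eq_Icc h.1.le hqr, h.Ico_eq,
      singleton_union, ncard_insert_of_notMem (fun hp => h.1.not_ge hp.1)
      (hfin.subset (Icc_subset_Icc_left h.1.le)), Nat.even_add_one, not_not]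

theorem parityColor_ne_of_covBy {p q : L} (h : p ⋖ q) : parityColor p ≠ parityColor q := by
  have hpq : Quotient.mk (finiteGapSetoid L) p = Quotient.mk _ q :=
    Quotient.sound (show (uIcc p q).Finite by rw [uIcc_of_le h.1.le, h.Icc_eq]; toFinite_tac)
  have hfin : (uIcc (Quotient.mk (finiteGapSetoid L) p).out p).Finite :=
    Quotient.mk_out (s := finiteGapSetoid L) p
  rw [parityColor, parityColor, ← hpq, ne_eq, decide_eq_decide, h.even_ncard_uIcc_iff hfin]
  exact iff_not_self

open scoped Classical in
noncomputable def denseBicoloring (A : Set L) (z : L) : Bool :=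
  if ∃ w, w ⋖ z ∨ z ⋖ w then parityColor z else decide (z ∈ A)

theorem denseBicoloring_ne_of_covBy (A : Set L) {p q : L} (h : p ⋖ q) :
    denseBicoloring A p ≠ denseBicoloring A q := by
  rw [denseBicoloring, denseBicoloring, if_pos ⟨q, .inr h⟩, if_pos ⟨p, .inl h⟩]
  exact parityColor_ne_of_covBy h

theorem IsDenseSegment.denseBicoloring_eq_true_iff {x y z : L} (h : IsDenseSegment x y)
    (hz : z ∈ Ioo x y) (A : Set L) : denseBicoloring A z = true ↔ z ∈ A := by
  classical
  rw [denseBicoloring, if_neg]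
  · exact decide_eq_true_iff
  rintro ⟨w, hwz | hzw⟩
  exacts [(h.not_covBy_of_mem_Ioo hz w).1 hwz, (h.not_covBy_of_mem_Ioo hz w).2 hzw]

theorem exists_denseBicoloring_ne {A : Set L}
    (hA : ∀ x y, IsDenseSegment x y → (Ioo x y ∩ A).Nonempty ∧ (Ioo x y \ A).Nonempty)
    {x y : L} (hxy : x < y) :
    ∃ p ∈ Icc x y, ∃ q ∈ Icc x y, denseBicoloring A p ≠ denseBicoloring A q := by
  by_cases hdense : IsDenseSegment x y
  · obtain ⟨⟨a, ha, haA⟩, ⟨b, hb, hbA⟩⟩ := hA x y hdense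
    refine ⟨a, Ioo_subset_Icc_self ha, b, Ioo_subset_Icc_self hb, ?_⟩
    rw [ne_eq, Bool.eq_iff_iff, hdense.denseBicoloring_eq_true_iff ha,
      hdense.denseBicoloring_eq_true_iff hb]
    exact fun h => hbA (h.1 haA)
  · obtain ⟨p, q, hxp, hqy, hpq, hgap⟩ : ∃ p q, x ≤ p ∧ q ≤ y ∧ p < q ∧ ¬ (Ioo p q).Nonempty := by
      simpa [IsDenseSegment, hxy] using hdense
    refine ⟨p, ⟨hxp, hpq.le.trans hqy⟩, q, ⟨hxp.trans hpq.le, hqy⟩, ?_⟩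
    exact denseBicoloring_ne_of_covBy A (covBy_iff_Ioo_eq.2 ⟨hpq, not_nonempty_iff_eq_empty.1 hgap⟩)

theorem exists_eq_false_and_exists_eq_true_of_ne {α : Type*} {β : α → Bool} {s : Set α}
    {p q : α} (hp : p ∈ s) (hq : q ∈ s) (h : β p ≠ β q) :
    (∃ a ∈ s, β a = false) ∧ (∃ b ∈ s, β b = true) := by
  cases hβp : β p
  · exact ⟨⟨p, hp, hβp⟩, ⟨q, hq, by simpa [hβp] using h.symm⟩⟩
  · exact ⟨⟨q, hq, by simpa [hβp] using h.symm⟩, ⟨p, hp, hβp⟩⟩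

/-- Every linear order admits a dense bicoloration: a 2-coloring `β` such that
both color classes meet every interval with at least two elements. -/
theorem every_linearOrder_admits_dense_bicoloration (L : Type*) [LinearOrder L] :
    ∃ β : L → Bool,
      ∀ I : Set L, IsInterval I → I.Nontrivial →
        (∃ a ∈ I, β a = false) ∧ (∃ b ∈ I, β b = true) := by
  obtain ⟨A, hA⟩ := exists_split_of_isDenseSegment (L := L)
  refine ⟨denseBicoloring A, fun I hI ⟨x, hx, y, hy, hxy⟩ => ?_⟩
  wlog hlt : x < y generalizing x y
  · exact this y hy x hx hxy.symm (hxy.lt_or_gt.resolve_left hlt)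
  obtain ⟨p, hp, q, hq, hpq⟩ := exists_denseBicoloring_ne hA hlt
  exact exists_eq_false_and_exists_eq_true_of_ne (hI x hx y hy p hp.1 hp.2)
    (hI x hx y hy q hq.1 hq.2) hpq
end

section
/- Let σ be a 2-structure on V with a distinguished family P(σ) of prime clans (those clans C such that every clan D with C ∩ D ≠ ∅ satisfies C ⊆ D or D ⊆ C). Then for every nonempty W ⊆ V, the intersection of all prime clans of σ containing W is itself a prime clan of σ. -/
/-- A 2-structure on `V`: an equivalence relation on ordered pairs
(only its restriction to pairs of distinct elements is meaningful). -/
structure TwoStructure (V : Type*) where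
  rel : V × V → V × V → Prop
  equiv : Equivalence rel

namespace TwoStructure

variable {V : Type*}

/-- `C` is a clan of `σ`. -/
def IsClan (σ : TwoStructure V) (C : Set V) : Prop :=
  ∀ c ∈ C, ∀ d ∈ C, ∀ v ∉ C, σ.rel (c, v) (d, v) ∧ σ.rel (v, c) (v, d)

/-- The equivalence class of the pair `p`. -/
def classOf (σ : TwoStructure V) (p : V × V) : Set (V × V) :=
  {q | q.1 ≠ q.2 ∧ σ.rel p q}

/-- `e` is an equivalence class of `σ`. -/
def IsClass (σ : TwoStructure V) (e : Set (V × V)) : Prop :=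
  ∃ p : V × V, p.1 ≠ p.2 ∧ e = σ.classOf p

/-- The dual 2-structure `σ*`. -/
def dual (σ : TwoStructure V) : TwoStructure V where
  rel p q := σ.rel (p.2, p.1) (q.2, q.1)
  equiv := ⟨fun _ => σ.equiv.refl _, fun h => σ.equiv.symm h,
    fun h h' => σ.equiv.trans h h'⟩

/-- The conjunction `σ ∧ τ` of two 2-structures on the same vertex set. -/
def conj (σ τ : TwoStructure V) : TwoStructure V where
  rel p q := σ.rel p q ∧ τ.rel p q
  equiv := ⟨fun p => ⟨σ.equiv.refl p, τ.equiv.refl p⟩,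
    fun h => ⟨σ.equiv.symm h.1, τ.equiv.symm h.2⟩,
    fun h h' => ⟨σ.equiv.trans h.1 h'.1, τ.equiv.trans h.2 h'.2⟩⟩

/-- `σ` is reversible: `σ = σ*` on pairs of distinct elements. -/
def Reversible (σ : TwoStructure V) : Prop :=
  ∀ p q : V × V, p.1 ≠ p.2 → q.1 ≠ q.2 →
    (σ.rel p q ↔ σ.rel (p.2, p.1) (q.2, q.1))

/-- `σ` is primitive: at least 3 vertices and only trivial clans. -/
def Primitive (σ : TwoStructure V) : Prop :=
  (∃ a b c : V, a ≠ b ∧ a ≠ c ∧ b ≠ c) ∧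
  ∀ C : Set V, σ.IsClan C → C = ∅ ∨ C = Set.univ ∨ ∃ v, C = {v}

/-- A clan `C` is prime if every clan meeting it is comparable with it. -/
def IsPrime (σ : TwoStructure V) (C : Set V) : Prop :=
  σ.IsClan C ∧ ∀ D : Set V, σ.IsClan D → (C ∩ D).Nonempty → C ⊆ D ∨ D ⊆ C

/-- `C` is a clan of the induced substructure `σ[W]`. -/
def IsClanIn (σ : TwoStructure V) (W C : Set V) : Prop :=
  C ⊆ W ∧ ∀ c ∈ C, ∀ d ∈ C, ∀ v ∈ W, v ∉ C →
    σ.rel (c, v) (d, v) ∧ σ.rel (v, c) (v, d)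

end TwoStructure

/-- The reverse `e*` of a set of ordered pairs. -/
def setStar {V : Type*} (e : Set (V × V)) : Set (V × V) := {q | (q.2, q.1) ∈ e}

namespace TwoStructure

variable {V : Type*} {σ : TwoStructure V} {S : Set (Set V)}

theorem isClan_sInter (hS : ∀ C ∈ S, σ.IsClan C) : σ.IsClan (⋂₀ S) := by
  intro c hc d hd v hv
  obtain ⟨C, hCS, hvC⟩ : ∃ C ∈ S, v ∉ C := by simpa [Set.mem_sInter] using hv
  exact hS C hCS c (hc C hCS) d (hd C hCS) v hvC

theorem isPrime_sInter (hS : ∀ C ∈ S, σ.IsPrime C) : σ.IsPrime (⋂₀ S) := by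
  refine ⟨isClan_sInter fun C hC => (hS C hC).1, fun D hD hmeet => ?_⟩
  by_cases hsub : ∃ C ∈ S, C ⊆ D
  · obtain ⟨C, hCS, hCD⟩ := hsub
    exact Or.inl ((Set.sInter_subset_of_mem hCS).trans hCD)
  · push Not at hsub
    refine Or.inr (Set.subset_sInter fun C hCS => ?_)
    have hCD : (C ∩ D).Nonempty :=
      hmeet.mono (Set.inter_subset_inter_left D (Set.sInter_subset_of_mem hCS))
    exact ((hS C hCS).2 D hD hCD).resolve_left (hsub C hCS)

end TwoStructure

theorem sInter_prime_clans_prime_general {V : Type*} (σ : TwoStructure V)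
    (W : Set V) :
    σ.IsPrime (⋂₀ {C : Set V | σ.IsPrime C ∧ W ⊆ C}) :=
  TwoStructure.isPrime_sInter fun _ hC => hC.1

/-- For every nonempty `W ⊆ V`, the intersection of all prime clans
containing `W` is a prime clan. -/
theorem sInter_prime_clans_prime {V : Type*} (σ : TwoStructure V)
    (W : Set V) (hW : W.Nonempty) :
    σ.IsPrime (⋂₀ {C : Set V | σ.IsPrime C ∧ W ⊆ C}) :=
  sInter_prime_clans_prime_general σ W
end

section
/- Let σ be a 2-structure on V. If J and K are clans of σ such that J ∩ K ≠ ∅, J ⊄ K and K ⊄ J, then J \ K and K \ J are clans of σ, and J ∩ K and J ∪ K are clans of σ. -/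
private lemma diff_clan_aux {V : Type*} (σ : TwoStructure V)
    (J K : Set V) (hJ : σ.IsClan J) (hK : σ.IsClan K)
    (hKnJ : ¬ K ⊆ J) : σ.IsClan (J \ K) := by
  obtain ⟨w, hwK, hwJ⟩ := Set.not_subset.mp hKnJ
  intro c hc d hd v hv
  rcases Classical.em (v ∈ J) with hvJ | hvJ
  · have hvK : v ∈ K := by
      by_contra h; exact hv ⟨hvJ, h⟩
    have h1 := hK v hvK w hwK c hc.2
    have h2 := hJ c hc.1 d hd.1 w hwJ
    have h3 := hK v hvK w hwK d hd.2
    exact ⟨σ.equiv.trans h1.2 (σ.equiv.trans h2.1 (σ.equiv.symm h3.2)),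
      σ.equiv.trans h1.1 (σ.equiv.trans h2.2 (σ.equiv.symm h3.1))⟩
  · exact hJ c hc.1 d hd.1 v hvJ

/-- Overlapping clans decomposition: if `J`, `K` are clans with
`J ∩ K ≠ ∅`, `J ⊄ K` and `K ⊄ J`, then `J ∩ K`, `J ∪ K`, `J \ K` and
`K \ J` are all clans. -/
theorem overlapping_clans {V : Type*} (σ : TwoStructure V)
    (J K : Set V) (hJ : σ.IsClan J) (hK : σ.IsClan K)
    (hJK : (J ∩ K).Nonempty) (hJnK : ¬ J ⊆ K) (hKnJ : ¬ K ⊆ J) :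
    σ.IsClan (J ∩ K) ∧ σ.IsClan (J ∪ K) ∧
      σ.IsClan (J \ K) ∧ σ.IsClan (K \ J) := by
  obtain ⟨x, hxJ, hxK⟩ := hJK
  refine ⟨?_, ?_, diff_clan_aux σ J K hJ hK hKnJ,
    diff_clan_aux σ K J hK hJ hJnK⟩
  · intro c hc d hd v hv
    rcases Classical.em (v ∈ J) with hvJ | hvJ
    · have hvK : v ∉ K := fun h => hv ⟨hvJ, h⟩
      exact hK c hc.2 d hd.2 v hvK
    · exact hJ c hc.1 d hd.1 v hvJ
  · intro c hc d hd v hv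
    have hvJ : v ∉ J := fun h => hv (Or.inl h)
    have hvK : v ∉ K := fun h => hv (Or.inr h)
    rcases hc with hcJ | hcK <;> rcases hd with hdJ | hdK
    · exact hJ c hcJ d hdJ v hvJ
    · have h1 := hJ c hcJ x hxJ v hvJ
      have h2 := hK x hxK d hdK v hvK
      exact ⟨σ.equiv.trans h1.1 h2.1, σ.equiv.trans h1.2 h2.2⟩
    · have h1 := hK c hcK x hxK v hvK
      have h2 := hJ x hxJ d hdJ v hvJ
      exact ⟨σ.equiv.trans h1.1 h2.1, σ.equiv.trans h1.2 h2.2⟩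
    · exact hK c hcK d hdK v hvK
end
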